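/- arXiv:1308.0296 — 2 statements merged into one kernel-verified Lean document; each statement's English description precedes it below -/
import Mathlib

section
/- Let n ≥ 1. The orbit of [e₁] ∈ ℙ(ℂⁿ) under the complex orthogonal group O(n,ℂ) equals the set { [z] ∈ ℙ(ℂⁿ) : z₁² + ⋯ + zₙ² ≠ 0 }. -/
open Matrix

/-- The complex orthogonal group `O(n,ℂ)`: complex `n × n` matrices with `gᵀ g = 1`. -/
def complexOrthogonalGroup (n : ℕ) : Set (Matrix (Fin n) (Fin n) ℂ) :=
  { g | gᵀ * g = 1 }

namespace OrbitAux

variable {n : ℕ}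

noncomputable def refl (w : Fin n → ℂ) : Matrix (Fin n) (Fin n) ℂ :=
  1 - (2 / (w ⬝ᵥ w)) • vecMulVec w w

lemma vecMulVec_mul_self (w : Fin n → ℂ) :
    vecMulVec w w * vecMulVec w w = (w ⬝ᵥ w) • vecMulVec w w := by
  ext i j
  simp only [Matrix.mul_apply, vecMulVec_apply, Matrix.smul_apply, dotProduct, smul_eq_mul,
    Finset.sum_mul]
  exact Finset.sum_congr rfl fun k _ => by ring

lemma vecMulVec_mulVec (w x : Fin n → ℂ) :
    (vecMulVec w w) *ᵥ x = (w ⬝ᵥ x) • w := by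
  funext i
  simp only [Matrix.mulVec, dotProduct, vecMulVec_apply, Pi.smul_apply, smul_eq_mul,
    Finset.sum_mul]
  exact Finset.sum_congr rfl fun k _ => by ring

lemma vecMulVec_self_transpose (w : Fin n → ℂ) : (vecMulVec w w)ᵀ = vecMulVec w w := by
  ext i j; simp [vecMulVec_apply, mul_comm]

lemma refl_mem (w : Fin n → ℂ) (hw : w ⬝ᵥ w ≠ 0) :
    refl w ∈ complexOrthogonalGroup n := by
  have hT : (refl w)ᵀ = refl w := by
    simp [refl, transpose_sub, transpose_smul, vecMulVec_self_transpose]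
  show (refl w)ᵀ * refl w = 1
  rw [hT]
  set q := w ⬝ᵥ w with hq
  set M := vecMulVec w w with hM
  have hMM : M * M = q • M := vecMulVec_mul_self w
  have expand : refl w * refl w =
      1 - (2 / q) • M - (2 / q) • M + ((2 / q) * (2 / q)) • (M * M) := by
    simp only [refl, sub_mul, mul_sub, one_mul, mul_one, Matrix.smul_mul, Matrix.mul_smul,
      smul_smul]
    abel
  rw [expand, hMM, smul_smul]
  have hc : 2 / q * (2 / q) * q = (2 / q) + (2 / q) := by field_simp; ring
  rw [hc, add_smul]
  abel

lemma refl_mulVec (w x : Fin n → ℂ) :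
    (refl w) *ᵥ x = x - (2 / (w ⬝ᵥ w) * (w ⬝ᵥ x)) • w := by
  simp only [refl, sub_mulVec, one_mulVec, smul_mulVec, vecMulVec_mulVec, smul_smul]

lemma mul_mem {g h : Matrix (Fin n) (Fin n) ℂ} (hg : g ∈ complexOrthogonalGroup n)
    (hh : h ∈ complexOrthogonalGroup n) : g * h ∈ complexOrthogonalGroup n := by
  show (g * h)ᵀ * (g * h) = 1
  rw [transpose_mul, mul_assoc, ← mul_assoc gᵀ, hg, one_mul, hh]

lemma exists_orth (hn : 1 ≤ n) (v : Fin n → ℂ) (hv : v ⬝ᵥ v = 1) :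
    ∃ g ∈ complexOrthogonalGroup n, g *ᵥ (Pi.single ⟨0, hn⟩ 1 : Fin n → ℂ) = v := by
  set i0 : Fin n := ⟨0, hn⟩
  set e : Fin n → ℂ := Pi.single i0 1 with he
  have hee : e ⬝ᵥ e = 1 := by simp [he, single_dotProduct, Pi.single_eq_same]
  have hev : e ⬝ᵥ v = v i0 := by simp [he, single_dotProduct]
  have hve : v ⬝ᵥ e = v i0 := by rw [dotProduct_comm, hev]
  by_cases hq : (e - v) ⬝ᵥ (e - v) = 0
  · -- then v i0 = 1, use refl v * refl (e + v)
    have hq' : (e + v) ⬝ᵥ (e + v) = 2 + 2 * v i0 := by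
      simp only [add_dotProduct, dotProduct_add, hee, hev, hve, hv]; ring
    have h0 : 2 - 2 * v i0 = 0 := by
      have : (e - v) ⬝ᵥ (e - v) = 2 - 2 * v i0 := by
        simp only [sub_dotProduct, dotProduct_sub, hee, hev, hve, hv]; ring
      rw [← this, hq]
    have hv0 : v i0 = 1 := by linear_combination (-1/2 : ℂ) * h0
    have hq4 : (e + v) ⬝ᵥ (e + v) = 4 := by rw [hq', hv0]; norm_num
    have h4 : ((e + v) ⬝ᵥ (e + v)) ≠ 0 := by rw [hq4]; norm_num
    have hvv : v ⬝ᵥ v ≠ 0 := by rw [hv]; norm_num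
    refine ⟨refl v * refl (e + v), mul_mem (refl_mem v hvv) (refl_mem (e + v) h4), ?_⟩
    have h1 : (e + v) ⬝ᵥ e = 2 := by
      rw [add_dotProduct, hee, hve, hv0]; norm_num
    have hinner : refl (e + v) *ᵥ e = -v := by
      rw [refl_mulVec, h1, hq4]
      have hc1 : (2 / 4 * 2 : ℂ) = 1 := by norm_num
      rw [hc1, one_smul]; abel
    rw [← mulVec_mulVec, hinner, refl_mulVec, hv]
    have h2 : v ⬝ᵥ (-v) = -1 := by simp [hv]
    rw [h2]
    have hc2 : (2 / 1 * (-1) : ℂ) = -2 := by norm_num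
    rw [hc2]
    module
  · refine ⟨refl (e - v), refl_mem _ hq, ?_⟩
    rw [refl_mulVec]
    have h1 : (e - v) ⬝ᵥ e = 1 - v i0 := by rw [sub_dotProduct, hee, hve]
    have h2 : (e - v) ⬝ᵥ (e - v) = 2 * (1 - v i0) := by
      simp only [sub_dotProduct, dotProduct_sub, hee, hev, hve, hv]; ring
    have hcoef : 2 / ((e - v) ⬝ᵥ (e - v)) * ((e - v) ⬝ᵥ e) = 1 := by
      rw [h1, h2]
      have hne : (1 : ℂ) - v i0 ≠ 0 := by
        intro h; apply hq; rw [h2, h]; ring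
      field_simp
    rw [hcoef, one_smul]; abel

end OrbitAux

/-- the orbit of `[e₁] ∈ ℙ(ℂⁿ)` under `O(n,ℂ)` equals
`{ [z] : z₁² + ⋯ + zₙ² ≠ 0 }`. -/
theorem orbit_complex_orthogonal (n : ℕ) (hn : 1 ≤ n) :
    { x : Projectivization ℂ (Fin n → ℂ) |
        ∃ g ∈ complexOrthogonalGroup n,
          ∃ h : g.mulVec (Pi.single ⟨0, hn⟩ 1 : Fin n → ℂ) ≠ 0,
            x = Projectivization.mk ℂ _ h } =
    { x : Projectivization ℂ (Fin n → ℂ) | ∑ i : Fin n, (x.rep i) ^ 2 ≠ 0 } := by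
  ext x
  set e : Fin n → ℂ := Pi.single ⟨0, hn⟩ 1 with he
  have hee : e ⬝ᵥ e = 1 := by simp [he, single_dotProduct, Pi.single_eq_same]
  have hsum : ∀ z : Fin n → ℂ, ∑ i : Fin n, (z i) ^ 2 = z ⬝ᵥ z := by
    intro z; simp [dotProduct, sq]
  simp only [Set.mem_setOf_eq]
  constructor
  · rintro ⟨g, hg, hne, rfl⟩
    set y := g *ᵥ e with hy
    have hyy : y ⬝ᵥ y = 1 := by
      rw [hy, dotProduct_mulVec, ← mulVec_transpose, mulVec_mulVec, hg, one_mulVec, hee]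
    obtain ⟨a, ha⟩ := Projectivization.exists_smul_eq_mk_rep ℂ y hne
    rw [hsum, ← ha, smul_dotProduct, dotProduct_smul, hyy]
    simp [Units.smul_def, Units.ne_zero]
  · intro hx
    set z := x.rep with hz
    have hzz : z ⬝ᵥ z ≠ 0 := by rw [← hsum]; exact hx
    obtain ⟨c, hc⟩ := IsAlgClosed.exists_pow_nat_eq (z ⬝ᵥ z) zero_lt_two
    have hc0 : c ≠ 0 := by
      intro h; apply hzz; rw [← hc, h]; ring
    set v : Fin n → ℂ := c⁻¹ • z with hv
    have hvv : v ⬝ᵥ v = 1 := by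
      rw [hv, smul_dotProduct, dotProduct_smul, ← hc]
      field_simp
      ring_nf
      rw [← mul_pow, mul_inv_cancel₀ hc0, one_pow]
    obtain ⟨g, hg, hge⟩ := OrbitAux.exists_orth hn v hvv
    have hvne : v ≠ 0 := by
      intro h; rw [h] at hvv; simp at hvv
    have hne : g *ᵥ e ≠ 0 := by rw [hge]; exact hvne
    refine ⟨g, hg, hne, ?_⟩
    conv_lhs => rw [← Projectivization.mk_rep x]
    rw [Projectivization.mk_eq_mk_iff']
    refine ⟨c, ?_⟩
    rw [hge, hv, smul_smul, mul_inv_cancel₀ hc0, one_smul]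
end

section
/- Let n ≥ 2. The set { [z] ∈ ℙ(ℂⁿ) : Re(z), Im(z) are linearly independent over ℝ } is open and dense in ℙ(ℂⁿ). -/
open Projectivization Topology

/-- The quotient topology on the projectivization, induced from `V \ {0}`. -/
instance projSpaceTopology {K V : Type*} [DivisionRing K] [AddCommGroup V] [Module K V]
    [TopologicalSpace V] : TopologicalSpace (Projectivization K V) :=
  inferInstanceAs (TopologicalSpace (Quotient (projectivizationSetoid K V)))

private lemma pp_smul {n : ℕ} {z : Fin n → ℂ} {c : ℂ} (hc : c ≠ 0)
    (h : LinearIndependent ℝ ![fun i => (z i).re, fun i => (z i).im]) :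
    LinearIndependent ℝ ![fun i => ((c • z) i).re, fun i => ((c • z) i).im] := by
  rw [LinearIndependent.pair_iff] at h ⊢
  intro s t hst
  have key : (s * c.re + t * c.im) • (fun i => (z i).re) +
      (t * c.re - s * c.im) • (fun i => (z i).im) = 0 := by
    funext i
    have h0 := congrFun hst i
    simp only [Pi.add_apply, Pi.smul_apply, Pi.zero_apply, smul_eq_mul, Pi.smul_apply,
      smul_eq_mul, Complex.mul_re, Complex.mul_im] at h0 ⊢
    linarith [h0]
  obtain ⟨h1, h2⟩ := h _ _ key
  have hc2 : c.re ^ 2 + c.im ^ 2 ≠ 0 := by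
    have := Complex.normSq_pos.mpr hc
    simp only [Complex.normSq_apply] at this
    nlinarith
  have hs : s * (c.re ^ 2 + c.im ^ 2) =
      c.re * (s * c.re + t * c.im) - c.im * (t * c.re - s * c.im) := by ring
  have ht : t * (c.re ^ 2 + c.im ^ 2) =
      c.im * (s * c.re + t * c.im) + c.re * (t * c.re - s * c.im) := by ring
  rw [h1, h2] at hs ht
  simp only [mul_zero, sub_zero, add_zero, zero_sub, zero_add] at hs ht
  exact ⟨(mul_eq_zero.1 hs).resolve_right hc2, (mul_eq_zero.1 ht).resolve_right hc2⟩

private lemma pp_smul_iff {n : ℕ} {z : Fin n → ℂ} {c : ℂ} (hc : c ≠ 0) :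
    LinearIndependent ℝ ![fun i => ((c • z) i).re, fun i => ((c • z) i).im] ↔
      LinearIndependent ℝ ![fun i => (z i).re, fun i => (z i).im] := by
  refine ⟨fun h => ?_, pp_smul hc⟩
  have := pp_smul (inv_ne_zero hc) h
  rwa [smul_smul, inv_mul_cancel₀ hc, one_smul] at this

private lemma pp_mk {n : ℕ} (z : Fin n → ℂ) (hz : z ≠ 0) :
    LinearIndependent ℝ ![fun i => ((Projectivization.mk ℂ z hz).rep i).re,
        fun i => ((Projectivization.mk ℂ z hz).rep i).im] ↔
      LinearIndependent ℝ ![fun i => (z i).re, fun i => (z i).im] := by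
  obtain ⟨a, ha⟩ := Projectivization.exists_smul_eq_mk_rep ℂ z hz
  rw [← ha, Units.smul_def]
  exact pp_smul_iff a.ne_zero

private lemma pp_ne_zero {n : ℕ} {z : Fin n → ℂ}
    (h : LinearIndependent ℝ ![fun i => (z i).re, fun i => (z i).im]) : z ≠ 0 := by
  rintro rfl
  have := h.ne_zero 0
  simp only [Matrix.cons_val_zero, Pi.zero_apply, Complex.zero_re, ne_eq] at this
  exact this (funext fun i => rfl)

/-- for `n ≥ 2`, the set of lines `[z] ∈ ℙ(ℂⁿ)` with `Re z`, `Im z` linearly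
independent over `ℝ` is open and dense in `ℙ(ℂⁿ)`. -/
theorem isOpen_and_dense_linearIndependent_re_im (n : ℕ) (hn : 2 ≤ n) :
    IsOpen { x : Projectivization ℂ (Fin n → ℂ) |
        LinearIndependent ℝ ![fun i => (x.rep i).re, fun i => (x.rep i).im] } ∧
    Dense { x : Projectivization ℂ (Fin n → ℂ) |
        LinearIndependent ℝ ![fun i => (x.rep i).re, fun i => (x.rep i).im] } := by
  have hq : IsQuotientMap
      (@Quotient.mk' {v : Fin n → ℂ // v ≠ 0} (projectivizationSetoid ℂ (Fin n → ℂ))) :=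
    isQuotientMap_quotient_mk'
  have hpre : ∀ (v : {v : Fin n → ℂ // v ≠ 0}),
      ((@Quotient.mk' _ (projectivizationSetoid ℂ (Fin n → ℂ)) v) ∈
        { x : Projectivization ℂ (Fin n → ℂ) |
          LinearIndependent ℝ ![fun i => (x.rep i).re, fun i => (x.rep i).im] }) ↔
      LinearIndependent ℝ ![fun i => (v.1 i).re, fun i => (v.1 i).im] := by
    intro v
    show LinearIndependent ℝ ![fun i => ((Projectivization.mk ℂ v.1 v.2).rep i).re,
        fun i => ((Projectivization.mk ℂ v.1 v.2).rep i).im] ↔ _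
    exact pp_mk v.1 v.2
  have hopen2 : IsOpen {z : Fin n → ℂ |
      LinearIndependent ℝ ![fun i => (z i).re, fun i => (z i).im]} := by
    have hcont : Continuous fun z : Fin n → ℂ =>
        ![fun i => (z i).re, fun i => (z i).im] := by
      refine continuous_pi fun j => ?_
      fin_cases j
      · simpa using continuous_pi fun i => Complex.continuous_re.comp (continuous_apply i)
      · simpa using continuous_pi fun i => Complex.continuous_im.comp (continuous_apply i)
    exact isOpen_setOf_linearIndependent.preimage hcont
  constructor
  · apply hq.isOpen_preimage.mp
    have : (@Quotient.mk' _ (projectivizationSetoid ℂ (Fin n → ℂ))) ⁻¹' { x : Projectivization ℂ (Fin n → ℂ) |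
        LinearIndependent ℝ ![fun i => (x.rep i).re, fun i => (x.rep i).im] } =
        Subtype.val ⁻¹' {z : Fin n → ℂ |
          LinearIndependent ℝ ![fun i => (z i).re, fun i => (z i).im]} := by
      ext v
      exact hpre v
    exact this ▸ hopen2.preimage continuous_subtype_val
  · intro x
    induction x using Projectivization.ind with
    | h z hz =>
    by_cases hp : LinearIndependent ℝ ![fun i => (z i).re, fun i => (z i).im]
    · exact subset_closure ((pp_mk z hz).mpr hp)
    · -- z is a complex multiple of a real vector
      obtain ⟨c, w, hc, hw, hzw⟩ : ∃ (c : ℂ) (w : Fin n → ℝ),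
          c ≠ 0 ∧ w ≠ 0 ∧ z = fun i => c * (w i) := by
        rw [LinearIndependent.pair_iff] at hp
        push_neg at hp
        obtain ⟨s, t, hst, hne⟩ := hp
        by_cases hs : s = 0
        · have ht : t ≠ 0 := hne hs
          have him : ∀ i, (z i).im = 0 := by
            intro i
            have := congrFun hst i
            simp only [hs, Pi.add_apply, Pi.smul_apply, smul_eq_mul, zero_mul, zero_add,
              Pi.zero_apply] at this
            exact (mul_eq_zero.1 this).resolve_left ht
          refine ⟨1, fun i => (z i).re, one_ne_zero, ?_, ?_⟩
          · intro h0
            apply hz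
            funext i
            have := congrFun h0 i
            exact Complex.ext (by simpa using this) (him i)
          · funext i
            rw [one_mul]
            exact (Complex.ext (by simp) (by simp [him i])).symm
        · refine ⟨((-t/s : ℝ) : ℂ) + Complex.I, fun i => (z i).im, ?_, ?_, ?_⟩
          · intro h0
            have := congrArg Complex.im h0
            simp at this
          · intro h0
            apply hz
            funext i
            have h1 := congrFun h0 i
            simp only [Pi.zero_apply] at h1
            have h2 := congrFun hst i
            simp only [Pi.add_apply, Pi.smul_apply, smul_eq_mul, Pi.zero_apply, h1,
              mul_zero, add_zero] at h2
            exact Complex.ext (by simpa [hs] using (mul_eq_zero.1 h2).resolve_left hs) h1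
          · funext i
            have h2 := congrFun hst i
            simp only [Pi.add_apply, Pi.smul_apply, smul_eq_mul, Pi.zero_apply] at h2
            have hre : (z i).re = (-t/s) * (z i).im := by
              field_simp
              linarith
            apply Complex.ext
            · simpa using hre
            · simp
      -- pick u not in the span of w
      obtain ⟨u, hu⟩ : ∃ u : Fin n → ℝ, u ∉ Submodule.span ℝ {w} := by
        by_contra hcon
        push_neg at hcon
        have htop : Submodule.span ℝ {w} = ⊤ := eq_top_iff.2 fun u _ => hcon u
        have h1 : Module.finrank ℝ (Fin n → ℝ) = 1 := by
          rw [← finrank_top ℝ (Fin n → ℝ), ← htop]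
          exact finrank_span_singleton hw
        have h2 : Module.finrank ℝ (Fin n → ℝ) = n := by
          simp [Module.finrank_pi]
        omega
      have hwu : ∀ δ : ℝ, δ ≠ 0 → LinearIndependent ℝ ![w, fun i => δ * u i] := by
        intro δ hδ
        rw [LinearIndependent.pair_iff]
        intro s t h
        by_cases ht : t = 0
        · subst ht
          simp only [zero_smul, add_zero] at h
          exact ⟨(smul_eq_zero.1 h).resolve_right hw, rfl⟩
        · exfalso
          apply hu
          rw [Submodule.mem_span_singleton]
          refine ⟨-(s / (t * δ)), ?_⟩
          funext i
          have h1 := congrFun h i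
          simp only [Pi.add_apply, Pi.smul_apply, smul_eq_mul, Pi.zero_apply] at h1 ⊢
          field_simp
          linarith [mul_comm (u i) (t * δ)]
      -- perturbation sequence
      set m : Fin n → ℂ := fun i => c * Complex.I * (u i) with hm
      set f : ℕ → Fin n → ℂ := fun k => z + (1 / (k + 1) : ℝ) • m with hf
      have hppf : ∀ k : ℕ, LinearIndependent ℝ
          ![fun i => (f k i).re, fun i => (f k i).im] := by
        intro k
        have hδ : (1 / (k + 1) : ℝ) ≠ 0 := by positivity
        set ζ : Fin n → ℂ :=
          fun i => (w i : ℂ) + ((1 / (k + 1) : ℝ) * u i : ℝ) * Complex.I with hζ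
        have hfk : f k = c • ζ := by
          funext i
          simp only [hf, hζ, hm, Pi.add_apply, Pi.smul_apply, smul_eq_mul, hzw,
            Complex.real_smul]
          push_cast
          ring
        rw [hfk]
        apply pp_smul hc
        have hre : (fun i => (ζ i).re) = w := by
          funext i
          simp only [hζ, Complex.add_re, Complex.ofReal_re, Complex.mul_re,
            Complex.I_re, Complex.I_im, Complex.ofReal_im]
          ring
        have him : (fun i => (ζ i).im) = fun i => (1 / (k + 1) : ℝ) * u i := by
          funext i
          simp only [hζ, Complex.add_im, Complex.ofReal_im, Complex.mul_im,
            Complex.I_re, Complex.I_im, Complex.ofReal_re]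
          ring
        rw [hre, him]
        exact hwu _ hδ
      have hfn : ∀ k, f k ≠ 0 := fun k => pp_ne_zero (hppf k)
      have hf_t : Filter.Tendsto f Filter.atTop (nhds z) := by
        have h1 : Filter.Tendsto (fun k : ℕ => (1 / (k + 1) : ℝ)) Filter.atTop (nhds 0) :=
          tendsto_one_div_add_atTop_nhds_zero_nat
        have h2 := h1.smul_const m
        rw [zero_smul] at h2
        have h3 : Filter.Tendsto f Filter.atTop (nhds (z + 0)) :=
          Filter.Tendsto.add
            (tendsto_const_nhds : Filter.Tendsto (fun _ : ℕ => z) Filter.atTop (nhds z)) h2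
        rw [add_zero] at h3
        exact h3
      have hg : Filter.Tendsto (fun k => (⟨f k, hfn k⟩ : {v : Fin n → ℂ // v ≠ 0}))
          Filter.atTop (nhds (⟨z, hz⟩ : {v : Fin n → ℂ // v ≠ 0})) :=
        tendsto_subtype_rng.mpr hf_t
      have hgq : Filter.Tendsto
          (fun k => (@Quotient.mk' _ (projectivizationSetoid ℂ (Fin n → ℂ))
            (⟨f k, hfn k⟩ : {v : Fin n → ℂ // v ≠ 0})))
          Filter.atTop (nhds (@Quotient.mk' _ (projectivizationSetoid ℂ (Fin n → ℂ))
            (⟨z, hz⟩ : {v : Fin n → ℂ // v ≠ 0}))) :=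
        (hq.continuous.tendsto _).comp hg
      have hmk : (@Quotient.mk' _ (projectivizationSetoid ℂ (Fin n → ℂ))
          (⟨z, hz⟩ : {v : Fin n → ℂ // v ≠ 0})) = Projectivization.mk ℂ z hz := rfl
      rw [hmk] at hgq
      refine mem_closure_of_tendsto hgq (Filter.Eventually.of_forall fun k => ?_)
      exact (hpre ⟨f k, hfn k⟩).mpr (hppf k)
end
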